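/- arXiv:1607.08282 — 3 statements merged into one kernel-verified Lean document; each statement's English description precedes it below -/
import Mathlib

section
/- The function Ξ(c) := ∫_ℝ c φ(v)/(c² + v²) dv (φ(v) = e^{-v²}/√π) is strictly decreasing on (0, ∞): if 0 < c₂ < c₁ then Ξ(c₁) < Ξ(c₂). -/
open MeasureTheory Real

noncomputable def phi (v : ℝ) : ℝ := Real.exp (-v^2) / Real.sqrt Real.pi

noncomputable def Xi (c : ℝ) : ℝ := ∫ v, c * phi v / (c^2 + v^2)

noncomputable def G (c u : ℝ) : ℝ := Real.exp (-(c*u)^2) / (Real.sqrt Real.pi * (1 + u^2))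

lemma G_integrable (c : ℝ) : Integrable (G c) := by
  have h1 : Integrable (fun u : ℝ => (Real.sqrt Real.pi)⁻¹ * (1 + u^2)⁻¹) :=
    (integrable_inv_one_add_sq).const_mul _
  refine h1.mono' ?_ ?_
  · exact (Measurable.aestronglyMeasurable (by unfold G; fun_prop))
  · filter_upwards with u
    unfold G
    rw [Real.norm_eq_abs, abs_div, abs_of_nonneg (Real.exp_nonneg _),
      abs_of_pos (by positivity : (0:ℝ) < Real.sqrt Real.pi * (1+u^2))]
    rw [div_le_iff₀ (by positivity)]
    calc Real.exp (-(c*u)^2) ≤ 1 := Real.exp_le_one_iff.mpr (neg_nonpos.mpr (sq_nonneg _))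
      _ ≤ (Real.sqrt Real.pi)⁻¹ * (1 + u^2)⁻¹ * (Real.sqrt Real.pi * (1+u^2)) := by
          rw [mul_mul_mul_comm, inv_mul_cancel₀ (by positivity), inv_mul_cancel₀ (by positivity)]
          norm_num

lemma Xi_eq (c : ℝ) (hc : 0 < c) : Xi c = ∫ u, G c u := by
  have h := MeasureTheory.Measure.integral_comp_mul_left
    (fun v => c * phi v / (c^2 + v^2)) c
  have key : ∀ u : ℝ, c * (c * phi (c*u) / (c^2+(c*u)^2)) = G c u := by
    intro u
    unfold G phi
    have h1 : c^2+(c*u)^2 = c^2*(1+u^2) := by ring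
    have hs : Real.sqrt Real.pi ≠ 0 := by positivity
    have hu : (1:ℝ)+u^2 ≠ 0 := by positivity
    rw [h1]
    field_simp
  symm
  calc ∫ u, G c u = ∫ u, c * (c * phi (c*u) / (c^2+(c*u)^2)) := by
        congr 1; funext u; rw [key]
    _ = c * ∫ u, c * phi (c*u) / (c^2+(c*u)^2) := integral_const_mul _ _
    _ = c * (|c⁻¹| • ∫ v, c * phi v / (c^2+v^2)) := by rw [h]
    _ = Xi c := by
        rw [abs_of_pos (inv_pos.mpr hc), smul_eq_mul, ← mul_assoc,
          mul_inv_cancel₀ hc.ne', one_mul]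
        rfl

theorem Xi_strictAnti_pos : StrictAntiOn Xi (Set.Ioi 0) := by
  intro c₂ hc₂ c₁ hc₁ hlt
  have hc₂' : 0 < c₂ := hc₂
  have hc₁' : 0 < c₁ := hc₁
  rw [Xi_eq _ hc₁', Xi_eq _ hc₂']
  have hi₁ := G_integrable c₁
  have hi₂ := G_integrable c₂
  have hexp : ∀ u : ℝ, Real.exp (-(c₁*u)^2) ≤ Real.exp (-(c₂*u)^2) := by
    intro u
    apply Real.exp_le_exp.mpr
    rw [mul_pow, mul_pow]
    have h2 : c₂^2 ≤ c₁^2 := by nlinarith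
    nlinarith [mul_le_mul_of_nonneg_right h2 (sq_nonneg u)]
  have hnn : 0 ≤ fun u => G c₂ u - G c₁ u := by
    intro u
    simp only [Pi.zero_apply]
    rw [sub_nonneg]
    unfold G
    have hden : (0:ℝ) < Real.sqrt Real.pi * (1+u^2) := by positivity
    exact div_le_div_of_nonneg_right (hexp u) hden.le
  have hpos : 0 < ∫ u, (G c₂ u - G c₁ u) := by
    rw [integral_pos_iff_support_of_nonneg hnn (hi₂.sub hi₁)]
    have hsub : Set.Ioi (0:ℝ) ⊆ Function.support (fun u => G c₂ u - G c₁ u) := by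
      intro u hu
      have hu' : (0:ℝ) < u := hu
      have : Real.exp (-(c₁*u)^2) < Real.exp (-(c₂*u)^2) := by
        apply Real.exp_lt_exp.mpr
        rw [mul_pow, mul_pow]
        have h2 : c₂^2 < c₁^2 := by nlinarith
        have hu2 : 0 < u^2 := by positivity
        nlinarith
      have hden : (0:ℝ) < Real.sqrt Real.pi * (1+u^2) := by positivity
      have : G c₁ u < G c₂ u := by
        unfold G
        exact (div_lt_div_iff_of_pos_right hden).mpr this
      exact ne_of_gt (sub_pos.mpr this)
    calc (0:ENNReal) < volume (Set.Ioi (0:ℝ)) := by rw [Real.volume_Ioi]; exact ENNReal.zero_lt_top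
      _ ≤ volume (Function.support (fun u => G c₂ u - G c₁ u)) := measure_mono hsub
  rw [integral_sub hi₂ hi₁] at hpos
  linarith
end

section
/- The function Ξ(c) := ∫_ℝ c φ(v)/(c² + v²) dv (φ(v) = e^{-v²}/√π) is strictly decreasing on (-∞, 0). -/
open MeasureTheory Real

lemma F_integrable (c : ℝ) :
    Integrable (fun u : ℝ => Real.exp (-(c*u)^2) / (Real.sqrt Real.pi * (1 + u^2))) := by
  have h1 : Integrable (fun u : ℝ => (Real.sqrt Real.pi)⁻¹ * (1 + u^2)⁻¹) :=
    (integrable_inv_one_add_sq).const_mul _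
  refine h1.mono ?_ ?_
  · apply Continuous.aestronglyMeasurable
    apply Continuous.div (by continuity)
    · continuity
    · intro u
      positivity
  · filter_upwards with u
    have hπ : (0:ℝ) < Real.sqrt Real.pi := Real.sqrt_pos.2 Real.pi_pos
    have h2 : (0:ℝ) < 1 + u^2 := by positivity
    rw [Real.norm_eq_abs, Real.norm_eq_abs, abs_of_nonneg (by positivity),
      abs_of_nonneg (by positivity)]
    rw [div_le_iff₀ (by positivity)]
    have : Real.exp (-(c*u)^2) ≤ 1 := by
      rw [Real.exp_le_one_iff]; nlinarith [sq_nonneg (c*u)]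
    calc Real.exp (-(c*u)^2) ≤ 1 := this
      _ = (Real.sqrt Real.pi)⁻¹ * (1 + u^2)⁻¹ * (Real.sqrt Real.pi * (1 + u^2)) := by
          field_simp
      _ ≤ _ := le_refl _

lemma Xi_eq_s12 (c : ℝ) (hc : c < 0) :
    Xi c = -∫ u : ℝ, Real.exp (-(c*u)^2) / (Real.sqrt Real.pi * (1 + u^2)) := by
  have hc0 : c ≠ 0 := hc.ne
  have hnc : (0:ℝ) < -c := by linarith
  have key := MeasureTheory.Measure.integral_comp_mul_left
    (fun v : ℝ => c * phi v / (c^2 + v^2)) (-c)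
  have habs : |(-c)⁻¹| = (-c)⁻¹ := abs_of_pos (by positivity)
  rw [habs, smul_eq_mul] at key
  have heq : (fun x : ℝ => c * phi (-c * x) / (c^2 + (-c * x)^2))
      = fun x : ℝ => c⁻¹ * (Real.exp (-(c*x)^2) / (Real.sqrt Real.pi * (1 + x^2))) := by
    funext x
    have hπ : (0:ℝ) < Real.sqrt Real.pi := Real.sqrt_pos.2 Real.pi_pos
    have h2 : (0:ℝ) < 1 + x^2 := by positivity
    simp only [phi]
    have : c^2 + (-c * x)^2 = c^2 * (1 + x^2) := by ring
    rw [this]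
    have : (-c * x)^2 = (c * x)^2 := by ring
    rw [this]
    field_simp
  rw [heq] at key
  rw [integral_const_mul] at key
  set I := ∫ u : ℝ, Real.exp (-(c*u)^2) / (Real.sqrt Real.pi * (1 + u^2)) with hI
  have hXi : Xi c = (∫ v : ℝ, c * phi v / (c^2 + v^2)) := rfl
  rw [hXi]
  have h2 : (∫ (v : ℝ), c * phi v / (c ^ 2 + v ^ 2)) = (-c) * (c⁻¹ * I) := by
    rw [key]; field_simp
  rw [h2]
  field_simp

theorem Xi_strictAnti_neg : StrictAntiOn Xi (Set.Iio 0) := by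
  intro a ha b hb hab
  simp only [Set.mem_Iio] at ha hb
  rw [Xi_eq_s12 a ha, Xi_eq_s12 b hb, neg_lt_neg_iff]
  have hia := F_integrable a
  have hib := F_integrable b
  have hab2 : b^2 < a^2 := by nlinarith
  have hle : ∀ u : ℝ, Real.exp (-(a*u)^2) / (Real.sqrt Real.pi * (1 + u^2))
      ≤ Real.exp (-(b*u)^2) / (Real.sqrt Real.pi * (1 + u^2)) := by
    intro u
    have hπ : (0:ℝ) < Real.sqrt Real.pi := Real.sqrt_pos.2 Real.pi_pos
    have h1 : (b*u)^2 ≤ (a*u)^2 := by nlinarith [sq_nonneg u]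
    have h2 : Real.exp (-(a*u)^2) ≤ Real.exp (-(b*u)^2) := Real.exp_le_exp.2 (by linarith)
    exact div_le_div_of_nonneg_right h2 (by positivity) |>.trans_eq rfl
  have hdiff : 0 < ∫ u : ℝ, (Real.exp (-(b*u)^2) / (Real.sqrt Real.pi * (1 + u^2))
      - Real.exp (-(a*u)^2) / (Real.sqrt Real.pi * (1 + u^2))) := by
    rw [integral_pos_iff_support_of_nonneg_ae]
    · have hsub : Set.Ioi (0:ℝ) ⊆ Function.support (fun u : ℝ =>
          Real.exp (-(b*u)^2) / (Real.sqrt Real.pi * (1 + u^2))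
            - Real.exp (-(a*u)^2) / (Real.sqrt Real.pi * (1 + u^2))) := by
        intro u hu
        have hu0 : (0:ℝ) < u := hu
        have hπ : (0:ℝ) < Real.sqrt Real.pi := Real.sqrt_pos.2 Real.pi_pos
        have hu2 : (0:ℝ) < u^2 := by positivity
        have h1 : (b*u)^2 < (a*u)^2 := by nlinarith [mul_lt_mul_of_pos_right hab2 hu2]
        have hlt : Real.exp (-(a*u)^2) < Real.exp (-(b*u)^2) :=
          Real.exp_lt_exp.2 (by linarith)
        have h3 : Real.exp (-(a*u)^2) / (Real.sqrt Real.pi * (1 + u^2))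
            < Real.exp (-(b*u)^2) / (Real.sqrt Real.pi * (1 + u^2)) :=
          div_lt_div_of_pos_right hlt (by positivity)
        simp only [Function.mem_support]
        intro hzero
        rw [sub_eq_zero] at hzero
        linarith
      calc (0:ENNReal) < volume (Set.Ioi (0:ℝ)) := by
            rw [Real.volume_Ioi]; exact ENNReal.zero_lt_top
        _ ≤ _ := measure_mono hsub
    · filter_upwards with u
      have := hle u
      simp only [Pi.zero_apply]
      linarith
    · exact hib.sub hia
  rw [integral_sub hib hia] at hdiff
  linarith
end

section
/- Let ξ ≠ 0 be real, let c > 0, and set a := (cξ − 1)/ξ and k := a·i ∈ ℂ. Then k satisfies the fixed-point equation k = ∫_ℝ v φ(v) / (−iξk + iξv + 1) dv if and only if ξ = ∫_ℝ c φ(v)/(c² + v²) dv, where φ(v) = e^{-v²}/√π. -/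
open MeasureTheory Real Complex

/-!
With `a ξ = c ξ - 1` the denominator factors as `ξ (c + i v)`, and
`v / (c + i v) = -i (1 - c / (c + i v))` reduces the integral to `∫ φ = 1` and `∫ φ / (c + i v)`.
Since `φ` is even, symmetrising `v ↦ -v` turns the latter into the real integral
`∫ c φ / (c² + v²)`, so both sides of the fixed-point equation are `i` times real numbers
and comparing them gives `ξ = ∫ c φ / (c² + v²)`.
-/

lemma phi_neg (v : ℝ) : phi (-v) = phi v := by
  simp [phi]

lemma integrable_phi : Integrable phi := by
  have h := (integrable_exp_neg_mul_sq one_pos).div_const √π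
  simp only [neg_mul, one_mul] at h
  exact h

lemma integral_phi : ∫ v, phi v = 1 := by
  have hπ : √π ≠ 0 := by positivity
  simpa [phi, integral_div, hπ] using congrArg (· / √π) (integral_gaussian 1)

namespace Complex

variable {c : ℝ}

lemma ofReal_add_I_mul_ne_zero (hc : c ≠ 0) (v : ℝ) : (c : ℂ) + I * v ≠ 0 := by
  intro h
  simpa [hc] using congrArg re h

lemma norm_inv_ofReal_add_I_mul_le (hc : c ≠ 0) (v : ℝ) : ‖((c : ℂ) + I * v)⁻¹‖ ≤ |c|⁻¹ := by
  rw [norm_inv]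
  refine inv_anti₀ (abs_pos.mpr hc) ?_
  simpa using abs_re_le_norm ((c : ℂ) + I * v)

lemma ofReal_div_ofReal_add_I_mul (hc : c ≠ 0) (v : ℝ) :
    (v : ℂ) / (c + I * v) = -I * (1 - c / (c + I * v)) :=
  calc (v : ℂ) / (c + I * v) = -I * ((c + I * v) - c) / (c + I * v) := by
        congr 1; linear_combination (v : ℂ) * I_sq
    _ = -I * (1 - c / (c + I * v)) := by
        rw [mul_div_assoc, sub_div, div_self (ofReal_add_I_mul_ne_zero hc v)]

lemma div_ofReal_add_I_mul_add_div_ofReal_add_I_mul_neg (hc : c ≠ 0) (v : ℝ) (z : ℂ) :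
    z / (c + I * v) + z / (c + I * ↑(-v)) = ((2 * c / (c ^ 2 + v ^ 2) : ℝ) : ℂ) * z := by
  have h₁ := ofReal_add_I_mul_ne_zero hc v
  have h₂ := ofReal_add_I_mul_ne_zero hc (-v)
  have h₃ : (c : ℂ) ^ 2 + v ^ 2 ≠ 0 := by exact_mod_cast (by positivity : c ^ 2 + v ^ 2 ≠ 0)
  rw [div_add_div _ _ h₁ h₂, div_eq_iff (mul_ne_zero h₁ h₂)]
  push_cast
  field_simp
  linear_combination (2 * c * z * v ^ 2) * I_sq

end Complex

section

variable {c : ℝ}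

lemma MeasureTheory.Integrable.div_ofReal_add_I_mul {g : ℝ → ℂ} (hg : Integrable g) (hc : c ≠ 0) :
    Integrable (fun v : ℝ => g v / (c + I * v)) := by
  simp only [div_eq_mul_inv]
  exact hg.mul_bdd (by fun_prop) (.of_forall (norm_inv_ofReal_add_I_mul_le hc))

/-- Averaging over `v ↦ -v`, only the real part `c / (c² + v²)` of `1 / (c + i v)` survives
against an even weight. -/
lemma integral_div_ofReal_add_I_mul_of_even {f : ℝ → ℝ} (hf : Integrable f)
    (heven : ∀ v, f (-v) = f v) (hc : c ≠ 0) :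
    ∫ v : ℝ, (f v : ℂ) / (c + I * v) = ((∫ v : ℝ, c * f v / (c ^ 2 + v ^ 2) : ℝ) : ℂ) := by
  set g : ℝ → ℂ := fun v => (f v : ℂ) / (c + I * v)
  have hg : Integrable g := hf.ofReal.div_ofReal_add_I_mul hc
  have hsum : ∀ v, g v + g (-v) = ((2 * (c * f v / (c ^ 2 + v ^ 2)) : ℝ) : ℂ) := by
    intro v
    simp only [g, heven, div_ofReal_add_I_mul_add_div_ofReal_add_I_mul_neg hc]
    push_cast
    ring
  refine mul_left_cancel₀ (two_ne_zero (α := ℂ)) ?_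
  calc 2 * ∫ v, g v = (∫ v, g v) + ∫ v, g (-v) := by rw [integral_neg_eq_self]; ring
    _ = ∫ v, (g v + g (-v)) := (integral_add hg hg.comp_neg).symm
    _ = _ := by simp only [hsum, integral_complex_ofReal, integral_const_mul]; push_cast; rfl

end

theorem dispersion_fixed_point_iff
    (ξ : ℝ) (hξ : ξ ≠ 0) (c : ℝ) (hc : 0 < c)
    (a : ℝ) (ha : a = (c * ξ - 1) / ξ) (k : ℂ) (hk : k = (a : ℂ) * Complex.I) :
    (k = ∫ v : ℝ, (v : ℂ) * (phi v : ℂ) /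
        (-Complex.I * (ξ : ℂ) * k + Complex.I * (ξ : ℂ) * (v : ℂ) + 1)) ↔
    ξ = ∫ v : ℝ, c * phi v / (c^2 + v^2) := by
  set T := ∫ v : ℝ, c * phi v / (c ^ 2 + v ^ 2)
  have hden : ∀ v : ℝ, -I * ξ * k + I * ξ * v + 1 = ξ * (c + I * v) := by
    have haξ : (a : ℂ) * ξ = c * ξ - 1 := by
      exact_mod_cast (by rw [ha, div_mul_cancel₀ _ hξ] : a * ξ = c * ξ - 1)
    intro v
    rw [hk]
    linear_combination haξ - a * ξ * I_sq
  have hintegrand : ∀ v : ℝ, (v : ℂ) * phi v / (-I * ξ * k + I * ξ * v + 1)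
      = -I / ξ * (phi v - c * (phi v / (c + I * v))) := by
    intro v
    rw [hden, mul_comm (v : ℂ), ← div_mul_div_comm, ofReal_div_ofReal_add_I_mul hc.ne']
    ring
  have hintegral : ∫ v : ℝ, (v : ℂ) * phi v / (-I * ξ * k + I * ξ * v + 1)
      = ((c * T - 1) / ξ : ℝ) * I := by
    have hφ : Integrable fun v : ℝ => (phi v : ℂ) := integrable_phi.ofReal
    simp only [hintegrand, integral_const_mul]
    rw [integral_sub hφ ((hφ.div_ofReal_add_I_mul hc.ne').const_mul (c : ℂ)),
      integral_const_mul, integral_complex_ofReal, integral_phi,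
      integral_div_ofReal_add_I_mul_of_even integrable_phi phi_neg hc.ne']
    have hξ' : (ξ : ℂ) ≠ 0 := ofReal_ne_zero.mpr hξ
    push_cast
    field_simp
    ring
  rw [hintegral, hk, mul_left_inj' I_ne_zero, ofReal_inj, ha, div_left_inj' hξ]
  constructor <;> intro h
  · exact mul_left_cancel₀ hc.ne' (by linarith)
  · rw [h]
end
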